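/- Let χ : ℝ → ℂ belong to the Carleman class C_M{ℝ}. Then the difference equation f(s) - f(s+1) = χ(s) has the generalized Găvruța stability in C_M{ℝ}: for every y ∈ C_M{ℝ} and every δ : ℝ → [0,∞) with |y(s) - y(s+1) - χ(s)| ≤ δ(s) for all s ∈ ℝ, there exists z ∈ C_M{ℝ} with z(s) - z(s+1) = χ(s) for all s ∈ ℝ and |y(s) - z(s)| ≤ Σ_{n = -⌈(s-a)⁺⌉}^{⌈(b-s)⁺⌉ - 1} δ(s+n) for all s ∈ ℝ, where x⁺ := max(x,0) and ⌈·⌉ is the ceiling function. -/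

import Mathlib

open Filter Function

/-- The Carleman class `C_M{ℝ}` of smooth functions `f : ℝ → ℂ` whose derivatives satisfy
`‖f⁽ⁿ⁾‖ ≤ C_K ρ_K^n M_n` on every compact interval `K`. -/
noncomputable def CarlemanClass (M : ℕ → ℝ) : Set (ℝ → ℂ) :=
  {f | ContDiff ℝ (⊤ : ℕ∞) f ∧ ∀ α β : ℝ, ∃ C ρ : ℝ, 0 < C ∧ 0 < ρ ∧
    ∀ n : ℕ, ∀ x ∈ Set.Icc α β, ‖iteratedDeriv n f x‖ ≤ C * ρ ^ n * M n}

/-- Nonquasianalyticity of the Carleman class `C_M{ℝ}`. -/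
def Nonquasianalytic (M : ℕ → ℝ) : Prop :=
  ∃ f₀ ∈ CarlemanClass M, f₀ ≠ 0 ∧ ∃ x₀ : ℝ, ∀ n : ℕ, iteratedDeriv n f₀ x₀ = 0

/-- The standing assumptions on the weight sequence `M` : positivity, nonquasianalyticity
of `C_M{ℝ}`, almost-increasingness of `((M_n/n!)^{1/n})_{n ≥ 1}`, `1 = M_0 ≤ M_1`,
logarithmic convexity of `(M_n/n!)`, `sup_{n ≥ 1} (M_{n+1}/((n+1) M_n))^{1/n} < ∞` and
`liminf (M_n/n!)^{1/n} > 0`. -/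
def StandingAssumptions (M : ℕ → ℝ) : Prop :=
  (∀ n, 0 < M n) ∧ Nonquasianalytic M ∧
  (∃ C : ℝ, 0 < C ∧ ∀ p q : ℕ, 1 ≤ p → p ≤ q →
    (M p / (Nat.factorial p : ℝ)) ^ ((1 : ℝ) / (p : ℝ)) ≤
      C * (M q / (Nat.factorial q : ℝ)) ^ ((1 : ℝ) / (q : ℝ))) ∧
  (M 0 = 1 ∧ M 0 ≤ M 1) ∧
  (∀ n : ℕ, (M (n + 1) / (Nat.factorial (n + 1) : ℝ)) ^ 2 ≤
    (M n / (Nat.factorial n : ℝ)) * (M (n + 2) / (Nat.factorial (n + 2) : ℝ))) ∧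
  (∃ B : ℝ, ∀ n : ℕ, 1 ≤ n →
    (M (n + 1) / (((n : ℝ) + 1) * M n)) ^ ((1 : ℝ) / (n : ℝ)) ≤ B) ∧
  (0 < Filter.liminf (fun n : ℕ => (M n / (Nat.factorial n : ℝ)) ^ ((1 : ℝ) / (n : ℝ)))
    Filter.atTop)

/-!
Write `g s = y s - y (s + 1) - χ s`, so `g ∈ C_M{ℝ}` and `‖g‖ ≤ δ`. Log-convexity of `M_n / n!`
with `M_0 = 1` gives `C(n, i) M_i M_{n-i} ≤ M_n`, which makes `C_M{ℝ}` an algebra, and `M_0 ≤ M_1`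
makes `M` increasing, which makes `C_M{ℝ}` closed under primitives. Cutting a flat nonzero function
off at its flat point and taking `|·|²` gives a nonnegative element vanishing on a half-line; a
product of two affine rescalings of it is a bump supported in `(a, b)`, and its normalized
primitive yields a cutoff `ψ ∈ C_M{ℝ}` with `ψ = 1` on `(-∞, a]` and `ψ = 0` on `[b, ∞)`.
With `F = ψ g` and `G = (1 - ψ) g`, the locally finite sums
`u s = ∑_{n ≥ 0} F (s + n) - ∑_{n ≥ 1} G (s - n)` solve `u s - u (s + 1) = g s` and are bounded by
the sum of `‖g (s + n)‖` over exactly the indices of the statement; take `z = y - u`.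
-/

open scoped ContDiff Nat

def IsLogConvexSeq (m : ℕ → ℝ) : Prop :=
  ∀ n, m (n + 1) ^ 2 ≤ m n * m (n + 2)

namespace IsLogConvexSeq

variable {m : ℕ → ℝ}

theorem succ_mul_le_mul_succ (hm : IsLogConvexSeq m) (hpos : ∀ n, 0 < m n) {p q : ℕ}
    (hpq : p ≤ q) : m (p + 1) * m q ≤ m p * m (q + 1) := by
  have hratio : Monotone fun n => m (n + 1) / m n := by
    refine monotone_nat_of_le_succ fun n => ?_
    rw [div_le_div_iff₀ (hpos n) (hpos (n + 1))]
    nlinarith [hm n]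
  have := hratio hpq
  rwa [div_le_div_iff₀ (hpos p) (hpos q), mul_comm (m (q + 1))] at this

theorem mul_le_zero_mul_add (hm : IsLogConvexSeq m) (hpos : ∀ n, 0 < m n) (i j : ℕ) :
    m i * m j ≤ m 0 * m (i + j) := by
  induction i with
  | zero => simp
  | succ i ih =>
    have hstep := hm.succ_mul_le_mul_succ hpos (Nat.le_add_right i j)
    rw [Nat.add_right_comm]
    nlinarith [hpos i, hpos j, hpos (i + 1), hpos 0, hpos (i + j)]

end IsLogConvexSeq

section Weight

variable {M : ℕ → ℝ}

theorem choose_mul_le_of_isLogConvexSeq (hpos : ∀ n, 0 < M n) (hM0 : M 0 = 1)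
    (hlc : IsLogConvexSeq fun n => M n / n !) {n i : ℕ} (hi : i ≤ n) :
    n.choose i * M i * M (n - i) ≤ M n := by
  have hmpos : ∀ n, 0 < M n / n ! := fun n => div_pos (hpos n) (by positivity)
  have h := hlc.mul_le_zero_mul_add hmpos i (n - i)
  rw [Nat.add_sub_cancel' hi] at h
  simp only [hM0, Nat.factorial_zero, Nat.cast_one, div_one, one_mul] at h
  rw [Nat.cast_choose ℝ hi]
  calc (n ! / (i ! * (n - i)!) : ℝ) * M i * M (n - i)
      = n ! * (M i / i ! * (M (n - i) / (n - i)!)) := by field_simp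
    _ ≤ n ! * (M n / n !) := by gcongr
    _ = M n := by field_simp

theorem monotone_of_isLogConvexSeq (hpos : ∀ n, 0 < M n) (hM01 : M 0 ≤ M 1)
    (hlc : IsLogConvexSeq fun n => M n / n !) : Monotone M := by
  have hmpos : ∀ n, 0 < M n / n ! := fun n => div_pos (hpos n) (by positivity)
  refine monotone_nat_of_le_succ fun n => ?_
  have h := hlc.succ_mul_le_mul_succ hmpos (Nat.zero_le n)
  simp only [zero_add, Nat.factorial_zero, Nat.factorial_one, Nat.cast_one, div_one] at h
  have hm : M n / n ! ≤ M (n + 1) / (n + 1)! := by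
    nlinarith [hpos 0, hmpos n, mul_le_mul_of_nonneg_right hM01 (hmpos n).le]
  calc M n = M n / n ! * n ! := by field_simp
    _ ≤ M (n + 1) / (n + 1)! * (n + 1)! := by
        gcongr
        · exact (hmpos _).le
        · exact n.le_succ
    _ = M (n + 1) := by field_simp

end Weight

theorem iteratedDeriv_comp_affine {E : Type*} [NormedAddCommGroup E] [NormedSpace ℝ E]
    {f : ℝ → E} {n : ℕ} (hf : ContDiff ℝ n f) (k c x : ℝ) :
    iteratedDeriv n (fun x => f (k * x + c)) x = k ^ n • iteratedDeriv n f (k * x + c) := by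
  have hshift : ContDiff ℝ n fun y => f (y + c) := hf.comp (contDiff_id.add contDiff_const)
  rw [congrFun (iteratedDeriv_comp_const_smul hshift k) x,
    congrFun (iteratedDeriv_comp_add_const n f c) (k * x)]

namespace CarlemanClass

variable {M : ℕ → ℝ} {f g : ℝ → ℂ}

theorem contDiff_of_mem (hf : f ∈ CarlemanClass M) {n : ℕ} : ContDiff ℝ n f :=
  hf.1.of_le (mod_cast le_top)

theorem nonneg_of_mem (hf : f ∈ CarlemanClass M) (n : ℕ) : 0 ≤ M n := by
  obtain ⟨C, ρ, hC, hρ, hb⟩ := hf.2 0 0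
  have := (norm_nonneg _).trans (hb n 0 ⟨le_rfl, le_rfl⟩)
  exact nonneg_of_mul_nonneg_right (by rwa [mul_comm] at this) (by positivity)

theorem add_mem (hf : f ∈ CarlemanClass M) (hg : g ∈ CarlemanClass M) :
    (fun x => f x + g x) ∈ CarlemanClass M := by
  refine ⟨hf.1.add hg.1, fun α β => ?_⟩
  obtain ⟨Cf, ρf, hCf, hρf, hbf⟩ := hf.2 α β
  obtain ⟨Cg, ρg, hCg, hρg, hbg⟩ := hg.2 α β
  refine ⟨Cf + Cg, max ρf ρg, by positivity, lt_max_of_lt_left hρf, fun n x hx => ?_⟩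
  have hM := nonneg_of_mem hf n
  rw [iteratedDeriv_fun_add (contDiff_of_mem hf).contDiffAt (contDiff_of_mem hg).contDiffAt]
  calc ‖iteratedDeriv n f x + iteratedDeriv n g x‖
      ≤ Cf * ρf ^ n * M n + Cg * ρg ^ n * M n := norm_add_le_of_le (hbf n x hx) (hbg n x hx)
    _ ≤ Cf * max ρf ρg ^ n * M n + Cg * max ρf ρg ^ n * M n := by gcongr <;> simp
    _ = (Cf + Cg) * max ρf ρg ^ n * M n := by ring

theorem neg_mem (hf : f ∈ CarlemanClass M) : (fun x => -f x) ∈ CarlemanClass M := by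
  refine ⟨hf.1.neg, fun α β => ?_⟩
  obtain ⟨C, ρ, hC, hρ, hb⟩ := hf.2 α β
  exact ⟨C, ρ, hC, hρ, fun n x hx => by simpa using hb n x hx⟩

theorem sub_mem (hf : f ∈ CarlemanClass M) (hg : g ∈ CarlemanClass M) :
    (fun x => f x - g x) ∈ CarlemanClass M := by
  simpa [sub_eq_add_neg] using add_mem hf (neg_mem hg)

theorem const_mul_mem (c : ℂ) (hf : f ∈ CarlemanClass M) :
    (fun x => c * f x) ∈ CarlemanClass M := by
  refine ⟨contDiff_const.mul hf.1, fun α β => ?_⟩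
  obtain ⟨C, ρ, hC, hρ, hb⟩ := hf.2 α β
  refine ⟨(‖c‖ + 1) * C, ρ, by positivity, hρ, fun n x hx => ?_⟩
  rw [iteratedDeriv_const_mul c (contDiff_of_mem hf).contDiffAt, norm_mul]
  have hb' := hb n x hx
  calc ‖c‖ * ‖iteratedDeriv n f x‖ ≤ (‖c‖ + 1) * (C * ρ ^ n * M n) :=
        mul_le_mul (by linarith) hb' (norm_nonneg _) (by positivity)
    _ = (‖c‖ + 1) * C * ρ ^ n * M n := by ring

theorem conj_mem (hf : f ∈ CarlemanClass M) :
    (fun x => starRingEnd ℂ (f x)) ∈ CarlemanClass M := by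
  refine ⟨Complex.conjCLE.contDiff.comp hf.1, fun α β => ?_⟩
  obtain ⟨C, ρ, hC, hρ, hb⟩ := hf.2 α β
  refine ⟨C, ρ, hC, hρ, fun n x hx => ?_⟩
  have hnorm : ‖iteratedDeriv n (fun x => starRingEnd ℂ (f x)) x‖ = ‖iteratedDeriv n f x‖ := by
    rw [← norm_iteratedFDeriv_eq_norm_iteratedDeriv, ← norm_iteratedFDeriv_eq_norm_iteratedDeriv]
    exact Complex.conjLIE.norm_iteratedFDeriv_comp_left f x n
  exact hnorm ▸ hb n x hx

theorem comp_affine_mem (hf : f ∈ CarlemanClass M) (k c : ℝ) :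
    (fun x => f (k * x + c)) ∈ CarlemanClass M := by
  refine ⟨hf.1.comp ((contDiff_const.mul contDiff_id).add contDiff_const), fun α β => ?_⟩
  obtain ⟨C, ρ, hC, hρ, hb⟩ :=
    hf.2 (-(|k| * max |α| |β| + |c|)) (|k| * max |α| |β| + |c|)
  refine ⟨C, ρ * (|k| + 1), hC, by positivity, fun n x hx => ?_⟩
  have hmem : k * x + c ∈ Set.Icc (-(|k| * max |α| |β| + |c|)) (|k| * max |α| |β| + |c|) := by
    have hx' : |x| ≤ max |α| |β| := abs_le_max_abs_abs hx.1 hx.2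
    refine abs_le.mp ((abs_add_le _ _).trans ?_)
    rw [abs_mul]
    gcongr
  have hM := nonneg_of_mem hf n
  rw [iteratedDeriv_comp_affine (contDiff_of_mem hf), norm_smul, norm_pow, Real.norm_eq_abs]
  calc |k| ^ n * ‖iteratedDeriv n f (k * x + c)‖ ≤ (|k| + 1) ^ n * (C * ρ ^ n * M n) :=
        mul_le_mul (pow_le_pow_left₀ (abs_nonneg k) (by linarith) n) (hb n _ hmem)
          (norm_nonneg _) (by positivity)
    _ = C * (ρ * (|k| + 1)) ^ n * M n := by rw [mul_pow]; ring

theorem mul_mem (hchoose : ∀ n i, i ≤ n → n.choose i * M i * M (n - i) ≤ M n)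
    (hf : f ∈ CarlemanClass M) (hg : g ∈ CarlemanClass M) :
    (fun x => f x * g x) ∈ CarlemanClass M := by
  refine ⟨hf.1.mul hg.1, fun α β => ?_⟩
  obtain ⟨Cf, ρf, hCf, hρf, hbf⟩ := hf.2 α β
  obtain ⟨Cg, ρg, hCg, hρg, hbg⟩ := hg.2 α β
  set ρ := max ρf ρg
  refine ⟨Cf * Cg, 2 * ρ, by positivity, by positivity, fun n x hx => ?_⟩
  have hterm : ∀ i ∈ Finset.range (n + 1),
      ‖(n.choose i : ℂ) * iteratedDeriv i f x * iteratedDeriv (n - i) g x‖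
        ≤ Cf * Cg * ρ ^ n * M n := by
    intro i hi
    have hin : i ≤ n := Nat.lt_succ_iff.mp (Finset.mem_range.mp hi)
    have hMi := nonneg_of_mem hf i
    have hMni := nonneg_of_mem hg (n - i)
    rw [norm_mul, norm_mul, Complex.norm_natCast]
    calc (n.choose i : ℝ) * ‖iteratedDeriv i f x‖ * ‖iteratedDeriv (n - i) g x‖
        ≤ n.choose i * (Cf * ρ ^ i * M i) * (Cg * ρ ^ (n - i) * M (n - i)) := by
          have hfi : ‖iteratedDeriv i f x‖ ≤ Cf * ρ ^ i * M i :=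
            (hbf i x hx).trans (by gcongr; exact le_max_left _ _)
          have hgi : ‖iteratedDeriv (n - i) g x‖ ≤ Cg * ρ ^ (n - i) * M (n - i) :=
            (hbg (n - i) x hx).trans (by gcongr; exact le_max_right _ _)
          gcongr
      _ = Cf * Cg * (ρ ^ i * ρ ^ (n - i)) * (n.choose i * M i * M (n - i)) := by ring
      _ ≤ Cf * Cg * ρ ^ n * M n := by
          rw [← pow_add, Nat.add_sub_cancel' hin]
          gcongr
          exact hchoose n i hin
  rw [iteratedDeriv_fun_mul (contDiff_of_mem hf).contDiffAt (contDiff_of_mem hg).contDiffAt]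
  calc ‖∑ i ∈ Finset.range (n + 1), (n.choose i : ℂ) * iteratedDeriv i f x *
        iteratedDeriv (n - i) g x‖
      ≤ ∑ _i ∈ Finset.range (n + 1), Cf * Cg * ρ ^ n * M n :=
        (norm_sum_le _ _).trans (Finset.sum_le_sum hterm)
    _ = (n + 1 : ℕ) * (Cf * Cg * ρ ^ n * M n) := by simp
    _ ≤ 2 ^ n * (Cf * Cg * ρ ^ n * M n) := by
        have := nonneg_of_mem hf n
        gcongr
        exact_mod_cast Nat.lt_two_pow_self
    _ = Cf * Cg * (2 * ρ) ^ n * M n := by ring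

theorem zero_mem (hM : ∀ n, 0 ≤ M n) : (fun _ => 0 : ℝ → ℂ) ∈ CarlemanClass M :=
  ⟨contDiff_const, fun _ _ => ⟨1, 1, one_pos, one_pos, fun n _ _ => by
    simpa [iteratedDeriv_const] using hM n⟩⟩

theorem sum_mem {ι : Type*} (hM : ∀ n, 0 ≤ M n) (s : Finset ι) {F : ι → ℝ → ℂ}
    (hF : ∀ i ∈ s, F i ∈ CarlemanClass M) : (fun x => ∑ i ∈ s, F i x) ∈ CarlemanClass M := by
  classical
  induction s using Finset.induction_on with
  | empty => simpa using zero_mem hM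
  | insert i s hi ih =>
    simp_rw [Finset.sum_insert hi]
    exact add_mem (hF i (Finset.mem_insert_self i s))
      (ih fun j hj => hF j (Finset.mem_insert_of_mem hj))

theorem mem_of_eqOn_Ioi (h : ∀ α, ∃ g ∈ CarlemanClass M, Set.EqOn f g (Set.Ioi α)) :
    f ∈ CarlemanClass M := by
  refine ⟨contDiff_iff_contDiffAt.mpr fun x => ?_, fun α β => ?_⟩
  · obtain ⟨g, hg, hfg⟩ := h (x - 1)
    refine hg.1.contDiffAt.congr_of_eventuallyEq ?_
    filter_upwards [Ioi_mem_nhds (sub_one_lt x)] with t ht using hfg ht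
  · obtain ⟨g, hg, hfg⟩ := h (α - 1)
    obtain ⟨C, ρ, hC, hρ, hb⟩ := hg.2 α β
    refine ⟨C, ρ, hC, hρ, fun n x hx => ?_⟩
    rw [hfg.iteratedDeriv_of_isOpen isOpen_Ioi n (Set.mem_Ioi.mpr (by linarith [hx.1]))]
    exact hb n x hx

theorem mem_of_deriv_mem (h0 : 0 < M 0) (hmono : Monotone M) (hf : Differentiable ℝ f)
    (hd : deriv f ∈ CarlemanClass M) : f ∈ CarlemanClass M := by
  have hsmooth : ContDiff ℝ ∞ f := contDiff_infty_iff_deriv.mpr ⟨hf, hd.1⟩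
  refine ⟨hsmooth, fun α β => ?_⟩
  obtain ⟨C, ρ, hC, hρ, hb⟩ := hd.2 α β
  obtain ⟨c, hc⟩ := isCompact_Icc.exists_bound_of_continuousOn (hf.continuous.continuousOn
    (s := Set.Icc α β))
  refine ⟨max C (c / M 0), max ρ 1, lt_max_of_lt_left hC, by positivity, fun n x hx => ?_⟩
  cases n with
  | zero =>
    calc ‖iteratedDeriv 0 f x‖ ≤ c / M 0 * M 0 := by
          rw [iteratedDeriv_zero, div_mul_cancel₀ _ h0.ne']
          exact hc x hx
      _ ≤ max C (c / M 0) * max ρ 1 ^ 0 * M 0 := by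
          rw [pow_zero, mul_one]
          gcongr
          exact le_max_right _ _
  | succ n =>
    rw [iteratedDeriv_succ']
    calc ‖iteratedDeriv n (deriv f) x‖ ≤ C * ρ ^ n * M n := hb n x hx
      _ ≤ max C (c / M 0) * max ρ 1 ^ (n + 1) * M (n + 1) := by
          have := h0.le.trans (hmono (Nat.zero_le n))
          gcongr
          · exact le_max_left _ _
          · exact (pow_le_pow_left₀ hρ.le (le_max_left _ _) n).trans
              (pow_le_pow_right₀ (le_max_right _ _) n.le_succ)
          · exact hmono n.le_succ

end CarlemanClass

section FlatGluing

open Set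

variable {E : Type*} [NormedAddCommGroup E] [NormedSpace ℝ E] {f : ℝ → E} {x₀ : ℝ}

theorem hasDerivAt_indicator_Ici (hf : Differentiable ℝ f) (h0 : f x₀ = 0) (h1 : deriv f x₀ = 0)
    (x : ℝ) : HasDerivAt ((Ici x₀).indicator f) ((Ici x₀).indicator (deriv f) x) x := by
  rcases lt_trichotomy x x₀ with hx | rfl | hx
  · rw [indicator_of_notMem (notMem_Ici.mpr hx)]
    refine (hasDerivAt_const x (0 : E)).congr_of_eventuallyEq ?_
    filter_upwards [Iio_mem_nhds hx] with t ht
    exact indicator_of_notMem (notMem_Ici.mpr ht) _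
  · rw [indicator_of_mem self_mem_Ici, h1, ← hasDerivWithinAt_univ, ← Iic_union_Ici]
    have hval : (Ici x).indicator f x = 0 := by rw [indicator_of_mem self_mem_Ici, h0]
    refine HasDerivWithinAt.union ?_ ?_
    · refine (hasDerivWithinAt_const x _ (0 : E)).congr (fun t ht => ?_) hval
      rcases (mem_Iic.mp ht).lt_or_eq with h | rfl
      · exact indicator_of_notMem (notMem_Ici.mpr h) _
      · exact hval
    · rw [← h1]
      exact (hf x).hasDerivAt.hasDerivWithinAt.congr (fun t ht => indicator_of_mem ht _)
        (indicator_of_mem self_mem_Ici _)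
  · rw [indicator_of_mem (mem_Ici.mpr hx.le)]
    refine (hf x).hasDerivAt.congr_of_eventuallyEq ?_
    filter_upwards [Ioi_mem_nhds hx] with t ht
    exact indicator_of_mem (mem_Ici.mpr ht.le) _

theorem hasDerivAt_indicator_Ici_iteratedDeriv (hf : ContDiff ℝ ∞ f)
    (hflat : ∀ k, iteratedDeriv k f x₀ = 0) (n : ℕ) (x : ℝ) :
    HasDerivAt ((Ici x₀).indicator (iteratedDeriv n f))
      ((Ici x₀).indicator (iteratedDeriv (n + 1) f) x) x := by
  rw [iteratedDeriv_succ]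
  refine hasDerivAt_indicator_Ici (hf.differentiable_iteratedDeriv n
    (mod_cast WithTop.coe_lt_top _)) (hflat n) ?_ x
  rw [← iteratedDeriv_succ, hflat]

theorem iteratedDeriv_indicator_Ici (hf : ContDiff ℝ ∞ f)
    (hflat : ∀ k, iteratedDeriv k f x₀ = 0) (n : ℕ) :
    iteratedDeriv n ((Ici x₀).indicator f) = (Ici x₀).indicator (iteratedDeriv n f) := by
  induction n with
  | zero => simp
  | succ n ih =>
    rw [iteratedDeriv_succ, ih]
    exact funext fun x => (hasDerivAt_indicator_Ici_iteratedDeriv hf hflat n x).deriv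

theorem contDiff_indicator_Ici (hf : ContDiff ℝ ∞ f) (hflat : ∀ k, iteratedDeriv k f x₀ = 0) :
    ContDiff ℝ ∞ ((Ici x₀).indicator f) := by
  refine contDiff_of_differentiable_iteratedDeriv fun n _ x => ?_
  rw [iteratedDeriv_indicator_Ici hf hflat]
  exact (hasDerivAt_indicator_Ici_iteratedDeriv hf hflat n x).differentiableAt

theorem CarlemanClass.indicator_Ici_mem {M : ℕ → ℝ} {f : ℝ → ℂ} (hf : f ∈ CarlemanClass M)
    (hflat : ∀ k, iteratedDeriv k f x₀ = 0) : (Ici x₀).indicator f ∈ CarlemanClass M := by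
  refine ⟨contDiff_indicator_Ici hf.1 hflat, fun α β => ?_⟩
  obtain ⟨C, ρ, hC, hρ, hb⟩ := hf.2 α β
  refine ⟨C, ρ, hC, hρ, fun n x hx => ?_⟩
  rw [iteratedDeriv_indicator_Ici hf.1 hflat]
  exact norm_indicator_le_norm_self _ _ |>.trans (hb n x hx)

end FlatGluing

theorem Nonquasianalytic.exists_flat_lt {M : ℕ → ℝ} (hnq : Nonquasianalytic M) :
    ∃ f ∈ CarlemanClass M, ∃ x₀ t, x₀ < t ∧ f t ≠ 0 ∧ ∀ k, iteratedDeriv k f x₀ = 0 := by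
  obtain ⟨f, hf, hne, x₀, hflat⟩ := hnq
  obtain ⟨t, ht⟩ := Function.ne_iff.mp hne
  have hft : f t ≠ 0 := ht
  have hx₀t : x₀ ≠ t := by
    rintro rfl
    exact hft (by simpa using hflat 0)
  rcases hx₀t.lt_or_gt with h | h
  · exact ⟨f, hf, x₀, t, h, hft, hflat⟩
  · refine ⟨fun x => f ((-1) * x + 2 * x₀), CarlemanClass.comp_affine_mem hf (-1) (2 * x₀),
      x₀, 2 * x₀ - t, by linarith, by simpa using hft, fun k => ?_⟩
    rw [iteratedDeriv_comp_affine (CarlemanClass.contDiff_of_mem hf),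
      show (-1) * x₀ + 2 * x₀ = x₀ by ring, hflat, smul_zero]

theorem Nonquasianalytic.exists_nonneg_mem_eq_zero_of_le {M : ℕ → ℝ}
    (hchoose : ∀ n i, i ≤ n → n.choose i * M i * M (n - i) ≤ M n) (hnq : Nonquasianalytic M) :
    ∃ (U : ℝ → ℝ) (p q : ℝ), p < q ∧ (fun x => (U x : ℂ)) ∈ CarlemanClass M ∧ 0 ≤ U ∧
      (∀ x ≤ p, U x = 0) ∧ 0 < U q := by
  obtain ⟨f, hf, x₀, t, hx₀t, hft, hflat⟩ := hnq.exists_flat_lt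
  set w := (Set.Ici x₀).indicator f
  have hw : w ∈ CarlemanClass M := CarlemanClass.indicator_Ici_mem hf hflat
  refine ⟨fun x => Complex.normSq (w x), x₀, t, hx₀t, ?_, fun x => Complex.normSq_nonneg _,
    fun x hx => ?_, ?_⟩
  · simpa only [Complex.mul_conj] using CarlemanClass.mul_mem hchoose hw (CarlemanClass.conj_mem hw)
  · rcases hx.lt_or_eq with h | rfl
    · simp [w, Set.indicator_of_notMem (Set.notMem_Ici.mpr h)]
    · simpa [w] using hflat 0
  · simpa [w, Set.indicator_of_mem (Set.mem_Ici.mpr hx₀t.le)] using hft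

theorem Nonquasianalytic.exists_bump {M : ℕ → ℝ}
    (hchoose : ∀ n i, i ≤ n → n.choose i * M i * M (n - i) ≤ M n) (hnq : Nonquasianalytic M)
    {a b : ℝ} (hab : a < b) :
    ∃ B : ℝ → ℝ, (fun x => (B x : ℂ)) ∈ CarlemanClass M ∧ 0 ≤ B ∧ (∀ x ≤ a, B x = 0) ∧
      (∀ x, b ≤ x → B x = 0) ∧ 0 < B ((a + b) / 2) := by
  obtain ⟨U, p, q, hpq, hU, hU0, hUp, hUq⟩ := hnq.exists_nonneg_mem_eq_zero_of_le hchoose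
  -- `x ↦ p + k (x - a)` and `x ↦ p + k (b - x)` send `a`, resp. `b`, to `p` and the midpoint to `q`
  set k := 2 * (q - p) / (b - a)
  have hk : 0 < k := div_pos (by linarith) (by linarith)
  refine ⟨fun x => U (p + k * (x - a)) * U (p + k * (b - x)), ?_,
    fun x => mul_nonneg (hU0 _) (hU0 _), fun x hx => ?_, fun x hx => ?_, ?_⟩
  · have h := CarlemanClass.mul_mem hchoose (CarlemanClass.comp_affine_mem hU k (p - k * a))
      (CarlemanClass.comp_affine_mem hU (-k) (p + k * b))
    convert h using 2 with x
    dsimp only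
    rw [show p + k * (x - a) = k * x + (p - k * a) by ring,
      show p + k * (b - x) = -k * x + (p + k * b) by ring]
    push_cast
    rfl
  · dsimp only
    rw [hUp (p + k * (x - a)) (by nlinarith), zero_mul]
  · dsimp only
    rw [hUp (p + k * (b - x)) (by nlinarith), mul_zero]
  · have hmid : k * ((b - a) / 2) = q - p := by
      simp only [k]
      field_simp [(sub_pos.mpr hab).ne']
    dsimp only
    rw [show (a + b) / 2 - a = (b - a) / 2 by ring, show b - (a + b) / 2 = (b - a) / 2 by ring,
      hmid, add_sub_cancel]
    exact mul_pos hUq hUq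

theorem intervalIntegral_pos_of_continuous_nonneg {B : ℝ → ℝ} (hB : Continuous B) (h0 : 0 ≤ B)
    {a b c : ℝ} (hc : c ∈ Set.Ioo a b) (hBc : 0 < B c) : 0 < ∫ t in a..b, B t := by
  rw [intervalIntegral.integral_pos_iff_support_of_nonneg_ae (Filter.Eventually.of_forall h0)
    (hB.intervalIntegrable a b)]
  refine ⟨hc.1.trans hc.2, lt_of_lt_of_le ?_ (MeasureTheory.measure_mono
    (Set.inter_subset_inter_right _ Set.Ioo_subset_Ioc_self))⟩
  exact (hB.isOpen_support.inter isOpen_Ioo).measure_pos _ ⟨c, hBc.ne', hc⟩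

theorem exists_cutoff_mem_carlemanClass {M : ℕ → ℝ}
    (hchoose : ∀ n i, i ≤ n → n.choose i * M i * M (n - i) ≤ M n) (h0 : 0 < M 0)
    (hmono : Monotone M) (hnq : Nonquasianalytic M) {a b : ℝ} (hab : a < b) :
    ∃ ψ : ℝ → ℝ, (fun x => (ψ x : ℂ)) ∈ CarlemanClass M ∧ (∀ x, ψ x ∈ Set.Icc 0 1) ∧
      (∀ x ≤ a, ψ x = 1) ∧ ∀ x, b ≤ x → ψ x = 0 := by
  obtain ⟨B, hBmem, hB0, hBa, hBb, hBmid⟩ := hnq.exists_bump hchoose hab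
  have hB : Continuous B :=
    (Complex.continuous_re.comp hBmem.1.continuous).congr fun x => Complex.ofReal_re (B x)
  have hzero : ∀ u v, (∀ t ∈ Set.uIcc u v, B t = 0) → ∫ t in u..v, B t = 0 := fun u v h =>
    (intervalIntegral.integral_congr h).trans intervalIntegral.integral_zero
  set Φ : ℝ → ℝ := fun s => ∫ t in a..s, B t
  have hΦ : ∀ s, HasDerivAt Φ (B s) s := fun s => (hB.integral_hasStrictDerivAt a s).hasDerivAt
  have hΦmono : Monotone Φ := monotone_of_deriv_nonneg (fun s => (hΦ s).differentiableAt)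
    fun s => (hΦ s).deriv ▸ hB0 s
  have hΦa : ∀ s ≤ a, Φ s = 0 := fun s hs =>
    hzero a s fun t ht => hBa t (by rw [Set.uIcc_of_ge hs] at ht; exact ht.2)
  have hΦb : ∀ s, b ≤ s → Φ s = Φ b := fun s hs => by
    change ∫ t in a..s, B t = ∫ t in a..b, B t
    rw [← intervalIntegral.integral_add_adjacent_intervals (hB.intervalIntegrable a b)
      (hB.intervalIntegrable b s), hzero b s fun t ht => hBb t (by
        rw [Set.uIcc_of_le hs] at ht; exact ht.1), add_zero]
  have hI : 0 < Φ b := intervalIntegral_pos_of_continuous_nonneg hB hB0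
    ⟨by linarith, by linarith⟩ hBmid
  have hΦbound : ∀ s, Φ s ∈ Set.Icc 0 (Φ b) := fun s =>
    ⟨hΦa _ (min_le_right s a) ▸ hΦmono (min_le_left s a),
      hΦb _ (le_max_right s b) ▸ hΦmono (le_max_left s b)⟩
  refine ⟨fun s => 1 - Φ s / Φ b, ?_, fun s => ?_, fun s hs => by simp [hΦa s hs],
    fun s hs => by simp [hΦb s hs, hI.ne']⟩
  · have hderiv : ∀ x, HasDerivAt (fun x => ((1 - Φ x / Φ b : ℝ) : ℂ))
        ((-(1 / Φ b) : ℝ) * (B x : ℂ)) x := fun x => by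
      convert (((hΦ x).div_const (Φ b)).const_sub 1).ofReal_comp using 1
      push_cast
      ring
    refine CarlemanClass.mem_of_deriv_mem h0 hmono (fun x => (hderiv x).differentiableAt) ?_
    rw [funext fun x => (hderiv x).deriv]
    exact CarlemanClass.const_mul_mem _ hBmem
  · exact ⟨by rw [sub_nonneg, div_le_one hI]; exact (hΦbound s).2,
      by linarith [div_nonneg (hΦbound s).1 hI.le]⟩

/-- For `F` vanishing on `[b, ∞)` this is the series `∑_{n ≥ 0} F (s + n)`. -/
noncomputable def forwardSum (b : ℝ) (F : ℝ → ℂ) (s : ℝ) : ℂ :=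
  ∑ n ∈ Finset.range ⌈b - s⌉₊, F (s + n)

section ForwardSum

variable {b : ℝ} {F : ℝ → ℂ}

theorem forwardSum_eq_sum_range (hF : ∀ x, b ≤ x → F x = 0) {s : ℝ} {N : ℕ}
    (hN : ⌈b - s⌉₊ ≤ N) : forwardSum b F s = ∑ n ∈ Finset.range N, F (s + n) := by
  refine Finset.sum_subset (Finset.range_subset_range.mpr hN) fun n _ hn => hF _ ?_
  have := Nat.ceil_le.mp (not_lt.mp (Finset.mem_range.not.mp hn))
  linarith

theorem forwardSum_sub_forwardSum_add_one (hF : ∀ x, b ≤ x → F x = 0) (s : ℝ) :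
    forwardSum b F s - forwardSum b F (s + 1) = F s := by
  have hshift : ∀ n : ℕ, s + ((n + 1 : ℕ) : ℝ) = s + 1 + n := fun n => by push_cast; ring
  rw [forwardSum_eq_sum_range hF (N := ⌈b - s⌉₊ + 1) (Nat.le_succ _),
    forwardSum_eq_sum_range hF (s := s + 1) (N := ⌈b - s⌉₊) (Nat.ceil_mono (by linarith)),
    Finset.sum_range_succ']
  simp only [hshift, Nat.cast_zero, add_zero, add_sub_cancel_left]

theorem norm_forwardSum_le (s : ℝ) :
    ‖forwardSum b F s‖ ≤ ∑ n ∈ Finset.range ⌈b - s⌉₊, ‖F (s + n)‖ :=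
  norm_sum_le _ _

theorem CarlemanClass.forwardSum_mem {M : ℕ → ℝ} (hF : F ∈ CarlemanClass M)
    (hFb : ∀ x, b ≤ x → F x = 0) : forwardSum b F ∈ CarlemanClass M :=
  CarlemanClass.mem_of_eqOn_Ioi fun α =>
    ⟨_, CarlemanClass.sum_mem (CarlemanClass.nonneg_of_mem hF) (Finset.range ⌈b - α⌉₊)
      fun n _ => by simpa using CarlemanClass.comp_affine_mem hF 1 n,
    fun _ hs => forwardSum_eq_sum_range hFb (Nat.ceil_mono (by linarith [Set.mem_Ioi.mp hs]))⟩

end ForwardSum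

theorem Int.ceil_max_zero {α : Type*} [Ring α] [LinearOrder α] [IsStrictOrderedRing α]
    [FloorRing α] (x : α) : ⌈max x 0⌉ = ⌈x⌉₊ := by
  rcases le_total x 0 with h | h
  · rw [max_eq_right h, Int.ceil_zero, Nat.ceil_eq_zero.mpr h, Nat.cast_zero]
  · rw [max_eq_left h, Int.natCast_ceil_eq_ceil h]

theorem Finset.sum_Icc_neg_eq_sum_range_add_sum_range {β : Type*} [AddCommMonoid β] (f : ℤ → β)
    (L U : ℕ) :
    ∑ k ∈ Finset.Icc (-(L : ℤ)) (U - 1), f k =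
      ∑ n ∈ Finset.range L, f (-(n + 1)) + ∑ n ∈ Finset.range U, f n := by
  have hshift : ∑ k ∈ Finset.Icc (-(L : ℤ)) (U - 1), f k =
      ∑ n ∈ Finset.range (L + U), f (n - L) := by
    symm
    refine Finset.sum_nbij' (fun n => (n : ℤ) - L) (fun k => (k + L).toNat) ?_ ?_ ?_ ?_ ?_ <;>
      intro <;>
      simp only [Finset.mem_range, Finset.mem_Icc, Int.toNat_natCast, sub_add_cancel,
        implies_true] <;>
      omega
  rw [hshift, Finset.sum_range_add, ← Finset.sum_range_reflect]
  congr 1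
  · refine Finset.sum_congr rfl fun n hn => congrArg f ?_
    have := Finset.mem_range.mp hn
    omega
  · exact Finset.sum_congr rfl fun n _ => congrArg f (by push_cast; ring)

theorem exists_add_eq_of_vanishing_Ici_Iic {M : ℕ → ℝ}
    (hchoose : ∀ n i, i ≤ n → n.choose i * M i * M (n - i) ≤ M n) (h0 : 0 < M 0)
    (hmono : Monotone M) (hnq : Nonquasianalytic M) {a b : ℝ} (hab : a < b) {g : ℝ → ℂ}
    (hg : g ∈ CarlemanClass M) :
    ∃ F ∈ CarlemanClass M, ∃ G ∈ CarlemanClass M, (∀ x, F x + G x = g x) ∧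
      (∀ x, b ≤ x → F x = 0) ∧ (∀ x ≤ a, G x = 0) ∧ (∀ x, ‖F x‖ ≤ ‖g x‖) ∧
      ∀ x, ‖G x‖ ≤ ‖g x‖ := by
  obtain ⟨ψ, hψ, hψ01, hψa, hψb⟩ := exists_cutoff_mem_carlemanClass hchoose h0 hmono hnq hab
  have hF : (fun x => ψ x * g x) ∈ CarlemanClass M := CarlemanClass.mul_mem hchoose hψ hg
  refine ⟨_, hF, _, CarlemanClass.sub_mem hg hF, fun x => add_sub_cancel _ _,
    fun x hx => by simp [hψb x hx], fun x hx => by simp [hψa x hx], fun x => ?_, fun x => ?_⟩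
  · rw [norm_mul, Complex.norm_real, Real.norm_of_nonneg (hψ01 x).1]
    exact mul_le_of_le_one_left (norm_nonneg _) (hψ01 x).2
  · rw [show g x - ψ x * g x = (1 - ψ x : ℝ) * g x by push_cast; ring, norm_mul,
      Complex.norm_real, Real.norm_of_nonneg (sub_nonneg.mpr (hψ01 x).2)]
    exact mul_le_of_le_one_left (norm_nonneg _) (by linarith [(hψ01 x).1])

theorem exists_sub_comp_add_one_eq {M : ℕ → ℝ}
    (hchoose : ∀ n i, i ≤ n → n.choose i * M i * M (n - i) ≤ M n) (h0 : 0 < M 0)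
    (hmono : Monotone M) (hnq : Nonquasianalytic M) {a b : ℝ} (hab : a < b) {g : ℝ → ℂ}
    (hg : g ∈ CarlemanClass M) :
    ∃ u ∈ CarlemanClass M, (∀ s, u s - u (s + 1) = g s) ∧ ∀ s, ‖u s‖ ≤
      ∑ n ∈ Finset.Icc (-⌈max (s - a) 0⌉) (⌈max (b - s) 0⌉ - 1), ‖g (s + n)‖ := by
  obtain ⟨F, hF, G, hG, hFG, hFb, hGa, hFg, hGg⟩ :=
    exists_add_eq_of_vanishing_Ici_Iic hchoose h0 hmono hnq hab hg
  -- `∑_{n ≥ 0} G (s - n - 1)` is the forward sum of the reflection `G'` at `-s`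
  set G' : ℝ → ℂ := fun x => G ((-1) * x + (-1))
  have hG'a : ∀ x, -a ≤ x → G' x = 0 := fun x hx => hGa _ (by linarith)
  have hG' : forwardSum (-a) G' ∈ CarlemanClass M :=
    CarlemanClass.forwardSum_mem (CarlemanClass.comp_affine_mem hG (-1) (-1)) hG'a
  have hG's : (fun s => forwardSum (-a) G' (-s)) ∈ CarlemanClass M := by
    simpa using CarlemanClass.comp_affine_mem hG' (-1) 0
  refine ⟨fun s => forwardSum b F s - forwardSum (-a) G' (-s),
    CarlemanClass.sub_mem (CarlemanClass.forwardSum_mem hF hFb) hG's, fun s => ?_, fun s => ?_⟩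
  · have hback := forwardSum_sub_forwardSum_add_one hG'a (-(s + 1))
    rw [show -(s + 1) + 1 = -s by ring, show G' (-(s + 1)) = G s from congrArg G (by ring)]
      at hback
    linear_combination forwardSum_sub_forwardSum_add_one hFb s + hback + hFG s
  · have hfwd : ‖forwardSum b F s‖ ≤ ∑ n ∈ Finset.range ⌈b - s⌉₊, ‖g (s + ((n : ℤ) : ℝ))‖ :=
      (norm_forwardSum_le s).trans (Finset.sum_le_sum fun n _ => by simpa using hFg (s + n))
    have hbwd : ‖forwardSum (-a) G' (-s)‖ ≤
        ∑ n ∈ Finset.range ⌈s - a⌉₊, ‖g (s + ((-(n + 1) : ℤ) : ℝ))‖ := by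
      rw [show s - a = -a - -s by ring]
      refine (norm_forwardSum_le _).trans (Finset.sum_le_sum fun n _ => ?_)
      rw [show G' (-s + n) = G (s + ((-(n + 1) : ℤ) : ℝ)) from congrArg G (by push_cast; ring)]
      exact hGg _
    rw [Int.ceil_max_zero, Int.ceil_max_zero,
      Finset.sum_Icc_neg_eq_sum_range_add_sum_range (fun k : ℤ => ‖g (s + k)‖), add_comm]
    exact (norm_sub_le _ _).trans (add_le_add hfwd hbwd)

theorem ggs_difference_equation_general
    (a b : ℝ) (hab : a < b) (M : ℕ → ℝ) (hM : StandingAssumptions M)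
    (χ : ℝ → ℂ) (hχM : χ ∈ CarlemanClass M)
    (y : ℝ → ℂ) (hy : y ∈ CarlemanClass M)
    (δ : ℝ → ℝ)
    (hyδ : ∀ s : ℝ, ‖y s - y (s + 1) - χ s‖ ≤ δ s) :
    ∃ z ∈ CarlemanClass M, (∀ s : ℝ, z s - z (s + 1) = χ s) ∧
      ∀ s : ℝ, ‖y s - z s‖ ≤
        ∑ n ∈ Finset.Icc (-⌈max (s - a) 0⌉) (⌈max (b - s) 0⌉ - 1), δ (s + (n : ℝ)) := by
  obtain ⟨hpos, hnq, -, ⟨hM0, hM01⟩, hlc, -, -⟩ := hM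
  have hy₁ : (fun s => y (s + 1)) ∈ CarlemanClass M := by
    simpa using CarlemanClass.comp_affine_mem hy 1 1
  have hdefect : (fun s => y s - y (s + 1) - χ s) ∈ CarlemanClass M :=
    CarlemanClass.sub_mem (CarlemanClass.sub_mem hy hy₁) hχM
  obtain ⟨u, hu, hu_eq, hu_le⟩ := exists_sub_comp_add_one_eq
    (fun n i hi => choose_mul_le_of_isLogConvexSeq hpos hM0 hlc hi) (hpos 0)
    (monotone_of_isLogConvexSeq hpos hM01 hlc) hnq hab hdefect
  refine ⟨fun s => y s - u s, CarlemanClass.sub_mem hy hu,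
    fun s => by linear_combination -hu_eq s, fun s => ?_⟩
  rw [sub_sub_cancel]
  exact (hu_le s).trans (Finset.sum_le_sum fun n _ => hyδ _)

/-- Generalized Găvruța stability of the difference equation `f(s) - f(s+1) = χ(s)` in the
nonquasianalytic Carleman class `C_M{ℝ}`. -/
theorem ggs_difference_equation
    (a b : ℝ) (hab : a < b) (M : ℕ → ℝ) (hM : StandingAssumptions M)
    (χ : ℝ → ℂ) (hχM : χ ∈ CarlemanClass M)
    (y : ℝ → ℂ) (hy : y ∈ CarlemanClass M)
    (δ : ℝ → ℝ) (hδ : ∀ s : ℝ, 0 ≤ δ s)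
    (hyδ : ∀ s : ℝ, ‖y s - y (s + 1) - χ s‖ ≤ δ s) :
    ∃ z ∈ CarlemanClass M, (∀ s : ℝ, z s - z (s + 1) = χ s) ∧
      ∀ s : ℝ, ‖y s - z s‖ ≤
        ∑ n ∈ Finset.Icc (-⌈max (s - a) 0⌉) (⌈max (b - s) 0⌉ - 1), δ (s + (n : ℝ)) :=
  ggs_difference_equation_general a b hab M hM χ hχM y hy δ hyδ
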